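/- arXiv:1511.01960 — 2 statements merged into one kernel-verified Lean document; each statement's English description precedes it below -/
import Mathlib

section
/- Let (M,s) be an initial S5-state of a definite action theory in which every world is reachable from s. If u ∼ v (i.e., π(u) = π(v)) and (u,x) ∈ B_i, then there exists a world y with (v,y) ∈ B_i and x ∼ y. In other words, the relation ∼ of having identical valuations is a bisimulation with respect to each accessibility relation B_i. -/
/-- Belief formulae over a set of agents `A` and a set of fluents `F`:
propositional formulae extended with belief operators `B_i` (`bel`),
group knowledge `E_α` (`ebel`) and common knowledge `C_α` (`cbel`). -/
inductive BForm (A F : Type) : Type where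
  | top  : BForm A F
  | atom : F → BForm A F
  | neg  : BForm A F → BForm A F
  | conj : BForm A F → BForm A F → BForm A F
  | disj : BForm A F → BForm A F → BForm A F
  | bel  : A → BForm A F → BForm A F
  | ebel : Set A → BForm A F → BForm A F
  | cbel : Set A → BForm A F → BForm A F

/-- A Kripke structure: a valuation of fluents at each world and an
accessibility relation for each agent. -/
structure Kripke (A W F : Type) where
  val : W → F → Prop
  rel : A → W → W → Prop

/-- Iterated group operator: `Esat M α P k w` says `E_α^k P` holds at `w`. -/
def Esat {A W F : Type} (M : Kripke A W F) (α : Set A) (P : W → Prop) : ℕ → W → Prop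
  | 0, w => P w
  | k + 1, w => ∀ i ∈ α, ∀ v, M.rel i w v → Esat M α P k v

/-- Kripke satisfaction of belief formulae.  Common knowledge `C_α φ` holds at
`w` iff `E_α^k φ` holds at `w` for every `k ≥ 0`. -/
def sat {A W F : Type} (M : Kripke A W F) : W → BForm A F → Prop
  | _, .top => True
  | w, .atom f => M.val w f
  | w, .neg φ => ¬ sat M w φ
  | w, .conj φ ψ => sat M w φ ∧ sat M w ψ
  | w, .disj φ ψ => sat M w φ ∨ sat M w ψ
  | w, .bel i φ => ∀ v, M.rel i w v → sat M v φ
  | w, .ebel α φ => ∀ i ∈ α, ∀ v, M.rel i w v → sat M v φ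
  | w, .cbel α φ => ∀ k : ℕ, Esat M α (fun v => sat M v φ) k w

/-- `M` is an S5 structure: each accessibility relation is an equivalence
relation (reflexive, symmetric, transitive). -/
def S5 {A W F : Type} (M : Kripke A W F) : Prop := ∀ i, Equivalence (M.rel i)

/-- Reachability via finite paths over the union of all accessibility relations. -/
def reach {A W F : Type} (M : Kripke A W F) : W → W → Prop :=
  Relation.ReflTransGen (fun u v => ∃ i, M.rel i u v)

/-- Reachability via finite paths labeled by agents in `α` only. -/
def reachIn {A W F : Type} (M : Kripke A W F) (α : Set A) : W → W → Prop :=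
  Relation.ReflTransGen (fun u v => ∃ i ∈ α, M.rel i u v)

/-- Two pointed Kripke structures are equivalent if they satisfy the same
belief formulae. -/
def equivState {A W W' F : Type} (M : Kripke A W F) (s : W) (M' : Kripke A W' F) (s' : W') : Prop :=
  ∀ φ : BForm A F, sat M s φ ↔ sat M' s' φ

/-- Fluent (purely propositional) formulae: no modal operators. -/
def IsProp {A F : Type} : BForm A F → Prop
  | .top => True
  | .atom _ => True
  | .neg φ => IsProp φ
  | .conj φ ψ => IsProp φ ∧ IsProp ψ
  | .disj φ ψ => IsProp φ ∧ IsProp ψ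
  | .bel _ _ => False
  | .ebel _ _ => False
  | .cbel _ _ => False

/-- The forms of initial statements of a definite action theory:
`initially φ`, `initially C φ`, `initially C(B_i φ)`,
`initially C(B_i φ ∨ B_i ¬φ)`, `initially C(¬B_i φ ∧ ¬B_i ¬φ)`. -/
inductive InitStmt (A F : Type) : Type where
  | base : BForm A F → InitStmt A F
  | common : BForm A F → InitStmt A F
  | cBel : A → BForm A F → InitStmt A F
  | cWhether : A → BForm A F → InitStmt A F
  | cIgnorant : A → BForm A F → InitStmt A F

/-- The belief formula expressed by an initial statement (`C` is common
knowledge among all agents). -/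
def InitStmt.form {A F : Type} : InitStmt A F → BForm A F
  | .base φ => φ
  | .common φ => .cbel Set.univ φ
  | .cBel i φ => .cbel Set.univ (.bel i φ)
  | .cWhether i φ => .cbel Set.univ (.disj (.bel i φ) (.bel i (.neg φ)))
  | .cIgnorant i φ => .cbel Set.univ (.conj (.neg (.bel i φ)) (.neg (.bel i (.neg φ))))

/-- The fluent formula occurring in an initial statement. -/
def InitStmt.inner {A F : Type} : InitStmt A F → BForm A F
  | .base φ => φ
  | .common φ => φ
  | .cBel _ φ => φ
  | .cWhether _ φ => φ
  | .cIgnorant _ φ => φ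

/-- A definite action theory: a set of initial statements whose embedded
formulae are fluent formulae, such that for each fluent formula `φ` and agent
`i` one of the statements `C(B_i φ)`, `C(B_i φ ∨ B_i ¬φ)`,
`C(¬B_i φ ∧ ¬B_i ¬φ)` belongs to the theory. -/
structure DefiniteTheory (A F : Type) where
  stmts : Set (InitStmt A F)
  wf : ∀ st ∈ stmts, IsProp st.inner
  definite : ∀ φ : BForm A F, IsProp φ → ∀ i : A,
    InitStmt.cBel i φ ∈ stmts ∨ InitStmt.cWhether i φ ∈ stmts ∨ InitStmt.cIgnorant i φ ∈ stmts

/-- `(M,s)` is an initial state of the theory `T`: it satisfies every initial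
statement of `T`. -/
def InitialState {A W F : Type} (T : DefiniteTheory A F) (M : Kripke A W F) (s : W) : Prop :=
  ∀ st ∈ T.stmts, sat M s st.form

/-! A fluent formula `χ` characterising the valuation of `x` exists because `F` is finite. By
definiteness, and because common knowledge at `s` propagates to every reachable world, agent `i`
has the same attitude towards `χ` at all worlds: `B_i χ`, `B_i χ ∨ B_i ¬χ`, or `¬B_i χ ∧ ¬B_i ¬χ`.
In each case some `i`-successor of `v` satisfies `χ`: `v` itself in the first case, `v` again in
the second (`B_i ¬χ` fails at `u` because of `x`, so `u` and hence `v` satisfy `χ`), and a witness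
of `¬B_i ¬χ` at `v` in the third. -/

variable {A W F : Type}

namespace BForm

def bigConj (l : List (BForm A F)) : BForm A F :=
  l.foldr conj top

open Classical in
noncomputable def literal (V : F → Prop) (f : F) : BForm A F :=
  if V f then atom f else neg (atom f)

noncomputable def charForm [Fintype F] (V : F → Prop) : BForm A F :=
  bigConj ((Finset.univ : Finset F).toList.map (literal V))

end BForm

section Semantics

variable (M : Kripke A W F)

theorem sat_bigConj (w : W) (l : List (BForm A F)) :
    sat M w (BForm.bigConj l) ↔ ∀ φ ∈ l, sat M w φ := by
  induction l with
  | nil => simp [BForm.bigConj, sat]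
  | cons φ l ih => simp [BForm.bigConj, sat, ← ih]

theorem sat_literal (w : W) (V : F → Prop) (f : F) :
    sat M w (BForm.literal V f) ↔ (M.val w f ↔ V f) := by
  by_cases hf : V f <;> simp [BForm.literal, hf, sat]

theorem sat_charForm [Fintype F] (w : W) (V : F → Prop) :
    sat M w (BForm.charForm V) ↔ M.val w = V := by
  simp only [BForm.charForm, sat_bigConj, List.forall_mem_map, Finset.mem_toList,
    Finset.mem_univ, true_implies, sat_literal, funext_iff, eq_iff_iff]

theorem esat_of_reachIn {α : Set A} {P : W → Prop} {s w : W} (h : ∀ k, Esat M α P k s)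
    (hw : reachIn M α s w) (k : ℕ) : Esat M α P k w := by
  induction hw generalizing k with
  | refl => exact h k
  | tail _ hstep ih =>
    obtain ⟨i, hi, hrel⟩ := hstep
    exact ih (k + 1) i hi _ hrel

theorem sat_of_sat_cbel_of_reachIn {α : Set A} {φ : BForm A F} {s w : W}
    (h : sat M s (.cbel α φ)) (hw : reachIn M α s w) : sat M w φ :=
  esat_of_reachIn M h hw 0

theorem reachIn_univ_of_reach {u v : W} (h : reach M u v) : reachIn M Set.univ u v :=
  Relation.ReflTransGen.mono (fun _ _ ⟨i, hi⟩ => ⟨i, Set.mem_univ i, hi⟩) u v h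

end Semantics

theorem isProp_bigConj {l : List (BForm A F)} (h : ∀ φ ∈ l, IsProp φ) :
    IsProp (BForm.bigConj l) := by
  induction l with
  | nil => trivial
  | cons φ l ih => exact ⟨h φ (by simp), ih fun ψ hψ => h ψ (by simp [hψ])⟩

theorem isProp_literal (V : F → Prop) (f : F) : IsProp (BForm.literal (A := A) V f) := by
  unfold BForm.literal
  split <;> trivial

theorem isProp_charForm [Fintype F] (V : F → Prop) : IsProp (BForm.charForm (A := A) V) :=
  isProp_bigConj fun _ hφ => by
    obtain ⟨f, -, rfl⟩ := List.mem_map.1 hφ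
    exact isProp_literal V f

def UniformAttitude (M : Kripke A W F) (i : A) (φ : BForm A F) : Prop :=
  (∀ w, sat M w (.bel i φ)) ∨ (∀ w, sat M w (.disj (.bel i φ) (.bel i (.neg φ)))) ∨
    ∀ w, sat M w (.conj (.neg (.bel i φ)) (.neg (.bel i (.neg φ))))

theorem InitialState.uniformAttitude {T : DefiniteTheory A F} {M : Kripke A W F} {s : W}
    (hI : InitialState T M s) (hr : ∀ w, reach M s w) {φ : BForm A F} (hφ : IsProp φ) (i : A) :
    UniformAttitude M i φ := by
  have common : ∀ st ∈ T.stmts, ∀ ψ, st.form = .cbel Set.univ ψ → ∀ w, sat M w ψ :=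
    fun st hst ψ hform w =>
      sat_of_sat_cbel_of_reachIn M (hform ▸ hI st hst) (reachIn_univ_of_reach M (hr w))
  exact (T.definite φ hφ i).imp (common _ · _ rfl) (Or.imp (common _ · _ rfl) (common _ · _ rfl))

theorem UniformAttitude.exists_rel_sat {M : Kripke A W F} {i : A} {φ : BForm A F}
    (h : UniformAttitude M i φ) (hrefl : ∀ w, M.rel i w w) {u v x : W} (hx : M.rel i u x)
    (hφx : sat M x φ) (huv : sat M u φ → sat M v φ) : ∃ y, M.rel i v y ∧ sat M y φ := by
  rcases h with hknow | hwhether | hignorant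
  · exact ⟨v, hrefl v, hknow v v (hrefl v)⟩
  · rcases hwhether u with hpos | hneg
    · exact ⟨v, hrefl v, huv (hpos u (hrefl u))⟩
    · exact absurd hφx (hneg x hx)
  · have hnot : ¬ ∀ y, M.rel i v y → ¬ sat M y φ := (hignorant v).2
    push Not at hnot
    exact hnot

/-- In an initial S5-state of a definite action theory with all
worlds reachable from `s`, the relation of having identical valuations is a
bisimulation for each accessibility relation. -/
theorem stmt5 {A W F : Type} [Fintype F] (T : DefiniteTheory A F)
    (M : Kripke A W F) (s : W)
    (h5 : S5 M) (hr : ∀ u : W, reach M s u) (hI : InitialState T M s)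
    (u v : W) (hsim : M.val u = M.val v) (i : A) (x : W) (hx : M.rel i u x) :
    ∃ y : W, M.rel i v y ∧ M.val x = M.val y := by
  have hχx : sat M x (BForm.charForm (A := A) (M.val x)) := (sat_charForm M x _).2 rfl
  have hχuv : sat M u (BForm.charForm (A := A) (M.val x)) →
      sat M v (BForm.charForm (A := A) (M.val x)) := by
    simp only [sat_charForm, hsim, imp_self]
  obtain ⟨y, hvy, hy⟩ := (hI.uniformAttitude hr (isProp_charForm (M.val x)) i).exists_rel_sat
    (h5 i).refl hx hχx hχuv
  exact ⟨y, hvy, ((sat_charForm M y _).1 hy).symm⟩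
end

section
/- Executing a sensing action a for fluent f in a consistency-preserving state (M,s) yields a successor (M',s') in which every partially observant agent commonly knows that the fully observant group knows whether f: (M',s') ⊨ C_P(C_F f ∨ C_F ¬f), where F and P are the fully and partially observant groups. -/
/-- The successor Kripke structure after a sensing action for fluent `f`.
It is built from a disjoint replica of `M` (the `Sum.inr` worlds, restricted to
worlds where the precondition `exec` holds) glued onto the original `M`
(the `Sum.inl` worlds): in the replica only edges of fully (`Fo`) or partially
(`Po`) observant agents are kept, and `Fo`-edges additionally require the two
endpoints to agree on `f`; oblivious agents point from replica worlds back into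
the original copy of `M`. -/
def senseSucc {A W F : Type} (M : Kripke A W F) (exec : W → Prop) (f : F)
    (Fo Po : Set A) : Kripke A (W ⊕ {u : W // exec u}) F where
  val x := match x with
    | Sum.inl u => M.val u
    | Sum.inr u => M.val u.1
  rel i x y := match x, y with
    | Sum.inl u, Sum.inl v => M.rel i u v
    | Sum.inr u, Sum.inr v =>
        (i ∈ Fo ∧ M.rel i u.1 v.1 ∧ (M.val u.1 f ↔ M.val v.1 f)) ∨ (i ∈ Po ∧ M.rel i u.1 v.1)
    | Sum.inr u, Sum.inl v => i ∉ Fo ∧ i ∉ Po ∧ M.rel i u.1 v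
    | Sum.inl _, Sum.inr _ => False

/-!
Every `Po`-edge leaving a replica world of the successor stays in the replica, and every
`Fo`-edge leaving a replica world stays in the replica and preserves the value of `f`
(this is where the disjointness of `Fo` and `Po` enters). Hence the replica is closed under
`Po`-paths, and the replica worlds agreeing with a given one on `f` are closed under
`Fo`-paths, which gives both common-knowledge operators.
-/

section CommonKnowledge

variable {A W F : Type} {M : Kripke A W F} {α : Set A}

theorem esat_of_closed {P Q : W → Prop} (hQ : ∀ i ∈ α, ∀ w v, M.rel i w v → Q w → Q v)
    (hP : ∀ w, Q w → P w) (k : ℕ) : ∀ w, Q w → Esat M α P k w := by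
  induction k with
  | zero => exact hP
  | succ k ih => exact fun w hw i hi v hv => ih v (hQ i hi w v hv hw)

theorem sat_cbel_of_closed {φ : BForm A F} {Q : W → Prop}
    (hQ : ∀ i ∈ α, ∀ w v, M.rel i w v → Q w → Q v) (hφ : ∀ w, Q w → sat M w φ)
    {w : W} (hw : Q w) : sat M w (.cbel α φ) :=
  fun k => esat_of_closed hQ hφ k w hw

end CommonKnowledge

section SenseSucc

variable {A W F : Type} {M : Kripke A W F} {exec : W → Prop} {f : F} {Fo Po : Set A}

theorem senseSucc_rel_inr_of_mem_Po {i : A} (hi : i ∈ Po) {u : {u : W // exec u}}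
    {y : W ⊕ {u : W // exec u}} (h : (senseSucc M exec f Fo Po).rel i (.inr u) y) :
    ∃ v, y = .inr v := by
  cases y with
  | inl v => exact absurd hi h.2.1
  | inr v => exact ⟨v, rfl⟩

theorem senseSucc_rel_inr_of_mem_Fo (hdisj : Disjoint Fo Po) {i : A} (hi : i ∈ Fo)
    {u : {u : W // exec u}} {y : W ⊕ {u : W // exec u}}
    (h : (senseSucc M exec f Fo Po).rel i (.inr u) y) :
    ∃ v, y = .inr v ∧ (M.val u.1 f ↔ M.val v.1 f) := by
  cases y with
  | inl v => exact absurd hi h.1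
  | inr v =>
    rcases h with ⟨-, -, hf⟩ | ⟨hiPo, -⟩
    · exact ⟨v, rfl, hf⟩
    · exact absurd hiPo (hdisj.notMem_of_mem_left hi)

theorem senseSucc_knowsWhether (hdisj : Disjoint Fo Po) (u : {u : W // exec u}) :
    sat (senseSucc M exec f Fo Po) (.inr u)
      (.disj (.cbel Fo (.atom f)) (.cbel Fo (.neg (.atom f)))) := by
  let Q : W ⊕ {u : W // exec u} → Prop := fun x => ∃ v, x = .inr v ∧ (M.val v.1 f ↔ M.val u.1 f)
  have hQ : ∀ i ∈ Fo, ∀ x y, (senseSucc M exec f Fo Po).rel i x y → Q x → Q y := by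
    rintro i hi x y hxy ⟨v, rfl, hv⟩
    obtain ⟨w, rfl, hvw⟩ := senseSucc_rel_inr_of_mem_Fo hdisj hi hxy
    exact ⟨w, rfl, hvw.symm.trans hv⟩
  have hu : Q (.inr u) := ⟨u, rfl, Iff.rfl⟩
  by_cases hf : M.val u.1 f
  · refine .inl (sat_cbel_of_closed hQ ?_ hu)
    rintro _ ⟨v, rfl, hv⟩
    exact hv.2 hf
  · refine .inr (sat_cbel_of_closed hQ ?_ hu)
    rintro _ ⟨v, rfl, hv⟩
    exact fun hvf => hf (hv.1 hvf)

end SenseSucc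

theorem stmt18_general {A W F : Type} (M : Kripke A W F) (s : W)
    (exec : W → Prop) (f : F) (Fo Po : Set A)
    (hdisj : Disjoint Fo Po) (hs : exec s) :
    sat (senseSucc M exec f Fo Po) (Sum.inr ⟨s, hs⟩)
      (.cbel Po (.disj (.cbel Fo (.atom f)) (.cbel Fo (.neg (.atom f))))) := by
  refine sat_cbel_of_closed (Q := fun x => ∃ v, x = .inr v) ?_ ?_ ⟨_, rfl⟩
  · rintro i hi _ y hxy ⟨u, rfl⟩
    exact senseSucc_rel_inr_of_mem_Po hi hxy
  · rintro _ ⟨u, rfl⟩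
    exact senseSucc_knowsWhether hdisj u

/-- After executing a sensing action for fluent `f` in a
consistency-preserving state, the partially observant group `Po` commonly
knows that the fully observant group `Fo` commonly knows whether `f`:
the successor satisfies `C_P (C_F f ∨ C_F ¬f)`. -/
theorem stmt18 {A W F : Type} (M : Kripke A W F) (s : W)
    (exec : W → Prop) (f : F) (Fo Po : Set A)
    (hdisj : Disjoint Fo Po) (hs : exec s)
    (hcp : ∀ u : W, ∀ i ∈ Fo ∪ Po,
      ¬ sat M u (.disj (.bel i (.atom f)) (.bel i (.neg (.atom f))))) :
    sat (senseSucc M exec f Fo Po) (Sum.inr ⟨s, hs⟩)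
      (.cbel Po (.disj (.cbel Fo (.atom f)) (.cbel Fo (.neg (.atom f))))) :=
  stmt18_general M s exec f Fo Po hdisj hs
end
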